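/- Let σ' be a prefix normal word chain generator of length n with σ'(i) = n for some i with 2 ≤ i ≤ n−1. Then the permutation σ obtained from σ' by swapping the values at positions i−1 and i (moving the entry n one step to the left) is also a prefix normal word chain generator. -/

import Mathlib

/-- A binary word (list of booleans, `true` = letter 1) is prefix normal if every
factor has at most as many 1s as the prefix of the same length. -/
def prefixNormal (w : List Bool) : Prop :=
  ∀ v : List Bool, v <:+: w → v.count true ≤ (w.take v.length).count true

/-- The word chain of a permutation σ of positions (0-indexed): `pnChain σ 0 = 1^n`
and `pnChain σ (k+1)` flips position `σ k` of `pnChain σ k` from 1 to 0.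
(`pnChain σ k` corresponds to the paper's `c_σ[k+1]`.) -/
def pnChain {n : ℕ} (σ : Equiv.Perm (Fin n)) : ℕ → List Bool
  | 0 => List.replicate n true
  | k + 1 => if h : k < n then (pnChain σ k).set (σ ⟨k, h⟩) false else pnChain σ k

/-- σ is a prefix normal word chain generator iff every word of its chain is prefix normal. -/
def isPNGen {n : ℕ} (σ : Equiv.Perm (Fin n)) : Prop :=
  ∀ k ≤ n, prefixNormal (pnChain σ k)

/-! Position `p` of the `t`-th chain word of `σ` is `1` exactly when `t ≤ σ⁻¹ p`. Composing `σ'`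
with the transposition of `k - 1` and `k` changes `σ'⁻¹` only by exchanging these two values, so the
two chains agree except at step `k`, where the new word is the `(k - 1)`-th word of `σ'` with its
letter at position `σ' k = n - 1`, the last one, set to `0`. Zeroing the last letter preserves
prefix normality: a factor ending there keeps its number of `1`s after dropping that letter, and
all other factors and prefixes are unchanged. -/

open List in
theorem prefixNormal_append_false {w : List Bool} {b : Bool} (h : prefixNormal (w ++ [b])) :
    prefixNormal (w ++ [false]) := by
  intro v hv
  rcases infix_concat_iff.1 hv with hsuf | hinf
  · rcases suffix_concat_iff.1 hsuf with rfl | ⟨u, rfl, hu⟩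
    · simp
    have hlen : u.length ≤ w.length := hu.length_le
    calc (u ++ [false]).count true = u.count true := by simp
      _ ≤ ((w ++ [b]).take u.length).count true := h u (hu.isInfix.trans (infix_append [] w [b]))
      _ = ((w ++ [false]).take u.length).count true := by
        rw [take_append_of_le_length hlen, take_append_of_le_length hlen]
      _ ≤ ((w ++ [false]).take (u ++ [false]).length).count true :=
        (take_prefix_take_left (by simp)).count_le true
  · have hlen := hinf.length_le
    have := h v (hinf.trans (prefix_append w [b]).isInfix)
    rwa [take_append_of_le_length hlen] at this ⊢

theorem prefixNormal_set_length_sub_one_false {w : List Bool} (h : prefixNormal w) :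
    prefixNormal (w.set (w.length - 1) false) := by
  rcases w.eq_nil_or_concat with rfl | ⟨u, b, rfl⟩
  · simpa using h
  · rw [List.concat_eq_append] at h ⊢
    simpa [List.set_append_right] using prefixNormal_append_false h

section pnChain

variable {n : ℕ} (σ : Equiv.Perm (Fin n))

theorem length_pnChain (t : ℕ) : (pnChain σ t).length = n := by
  induction t with
  | zero => simp [pnChain]
  | succ t ih => rw [pnChain]; split <;> simp [ih]

theorem getElem_pnChain (t : ℕ) (p : Fin n) (hp : (p : ℕ) < (pnChain σ t).length) :
    (pnChain σ t)[(p : ℕ)] = decide (t ≤ σ.symm p) := by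
  induction t with
  | zero => simp [pnChain]
  | succ t ih =>
    simp only [pnChain]
    split_ifs with ht
    · rw [List.getElem_set, ih]
      split_ifs with hσt
      · have : σ.symm p = ⟨t, ht⟩ := σ.symm_apply_eq.2 (Fin.ext hσt.symm)
        simp [this]
      · have : (σ.symm p : ℕ) ≠ t := fun h ↦ hσt (by simp [← h])
        simp only [decide_eq_decide]
        omega
    · rw [ih]
      simp only [decide_eq_decide]
      omega

theorem pnChain_eq_of_forall_le_iff {τ : Equiv.Perm (Fin n)} {t : ℕ}
    (h : ∀ p, t ≤ σ.symm p ↔ t ≤ τ.symm p) : pnChain σ t = pnChain τ t :=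
  List.ext_getElem (by simp only [length_pnChain]) fun i hσ hτ ↦ by
    have hi : i < n := length_pnChain σ t ▸ hσ
    rw [getElem_pnChain σ t ⟨i, hi⟩ hσ, getElem_pnChain τ t ⟨i, hi⟩ hτ, decide_eq_decide]
    exact h _

theorem pnChain_mul_swap_of_ne {k t : ℕ} (hk : k < n) (ht : t ≠ k) :
    pnChain (σ * Equiv.swap ⟨k - 1, by omega⟩ ⟨k, hk⟩) t = pnChain σ t := by
  refine pnChain_eq_of_forall_le_iff _ fun p ↦ ?_
  rw [Equiv.Perm.mul_def, Equiv.symm_trans_apply, Equiv.symm_swap, Equiv.swap_apply_def]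
  split_ifs <;> simp_all only [Fin.ext_iff] <;> omega

theorem pnChain_mul_swap_self {k : ℕ} (hk1 : 1 ≤ k) (hk : k < n) :
    pnChain (σ * Equiv.swap ⟨k - 1, by omega⟩ ⟨k, hk⟩) k
      = (pnChain σ (k - 1)).set (σ ⟨k, hk⟩) false := by
  obtain ⟨m, rfl⟩ : ∃ m, k = m + 1 := ⟨k - 1, by omega⟩
  rw [pnChain, dif_pos (by omega), pnChain_mul_swap_of_ne σ hk (by omega)]
  simp [Equiv.swap_apply_left]

end pnChain

/-- Moving the largest entry of a prefix normal generator one step to the left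
yields again a prefix normal generator. -/
theorem pnGen_shift_max_left {n : ℕ} (σ' : Equiv.Perm (Fin n)) (hσ' : isPNGen σ')
    (k : ℕ) (hk1 : 1 ≤ k) (hk : k + 1 < n)
    (hval : (σ' ⟨k, by omega⟩ : ℕ) = n - 1) :
    isPNGen (σ' * Equiv.swap ⟨k - 1, by omega⟩ ⟨k, by omega⟩) := by
  intro t ht
  by_cases htk : t = k
  · subst t
    rw [pnChain_mul_swap_self σ' hk1 (by omega), hval]
    simpa only [length_pnChain] using
      prefixNormal_set_length_sub_one_false (hσ' (k - 1) (by omega))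
  · rw [pnChain_mul_swap_of_ne σ' (by omega) htk]
    exact hσ' t ht
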